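/- Let d ≥ 1, α ∈ (0, 2), and let ν be the measure on ℝ^d with density z ↦ |z|^{−d−α} · 1_{⋃_{i≥0} {2^{−2i−1} ≤ |z| ≤ 2^{−2i}}}(z) with respect to Lebesgue measure, with characteristic exponent q(ξ) = ∫ (1 − cos⟨ξ, z⟩) ν(dz). Then there exists a constant c ≥ 1 such that c^{−1} |ξ|^{α} ≤ q(ξ) ≤ c |ξ|^{α} for all ξ ∈ ℝ^d with |ξ| ≥ 1. -/

import Mathlib

open MeasureTheory Metric
open scoped ENNReal RealInnerProductSpace

/-- The Lévy measure with density `|z|^{-d-α}` on the union of annuli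
`{2^{-2i-1} ≤ |z| ≤ 2^{-2i}}`, `i ≥ 0`, with respect to Lebesgue measure. -/
noncomputable def lacunaryStableMeasure (d : ℕ) (α : ℝ) :
    Measure (EuclideanSpace ℝ (Fin d)) :=
  MeasureTheory.volume.withDensity fun z =>
    Set.indicator
      {z : EuclideanSpace ℝ (Fin d) |
        ∃ i : ℕ, (2 : ℝ) ^ (-(2 * (i : ℝ) + 1)) ≤ ‖z‖ ∧ ‖z‖ ≤ (2 : ℝ) ^ (-(2 * (i : ℝ)))}
      (fun z => ENNReal.ofReal (‖z‖ ^ (-((d : ℝ) + α)))) z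

/-!
On the annulus `R / 2 ≤ |z| ≤ R` the measure `|z|^{-d-α} dz` has mass `≍ R^{-α}`, and there
`1 - cos⟨ξ, z⟩ ≤ 2 min(1, (|ξ| R)²)`. Summing over the annuli `R = 4^{-i}` of `ν` gives the upper
bound: the terms grow like `4^{iα}` while `4^i ≤ |ξ|` and decay like `|ξ|² 4^{i(α-2)}` afterwards,
so both parts are `O(|ξ|^α)`. For the lower bound a single annulus suffices: the one with
`4^i ≈ |ξ|` contains a ball of radius `4^{-i} / 8` on which `⟨ξ, z⟩ ∈ [1/8, 1]`, so
`1 - cos⟨ξ, z⟩` is bounded below there, while the ball has mass `≍ 4^{iα} ≍ |ξ|^α`.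
-/

namespace Real

theorem one_sub_cos_le_two_mul_min_one_sq (t : ℝ) : 1 - cos t ≤ 2 * min 1 (t ^ 2) := by
  have := one_sub_sq_div_two_le_cos (x := t)
  rcases min_cases 1 (t ^ 2) with ⟨h, -⟩ | ⟨h, -⟩ <;> rw [h]
  · linarith [neg_one_le_cos t]
  · nlinarith [sq_nonneg t]

theorem one_sub_cos_le_one_sub_cos {s t : ℝ} (hs : 0 ≤ s) (hst : s ≤ t) (ht : t ≤ π) :
    1 - cos s ≤ 1 - cos t := by
  linarith [cos_le_cos_of_nonneg_of_le_pi hs ht hst]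

end Real

theorem exists_pow_mem_Icc {b M : ℝ} (hb : 1 < b) (hM : 1 ≤ M) :
    ∃ i : ℕ, b ^ i ∈ Set.Icc M (b * M) := by
  obtain ⟨n, hn, hMn⟩ := exists_nat_pow_near hM hb
  exact ⟨n + 1, hMn.le, by rw [pow_succ']; gcongr⟩

theorem inv_pow_rpow_neg {b : ℝ} (hb : 0 ≤ b) (i : ℕ) (α : ℝ) :
    ((b ^ i)⁻¹) ^ (-α) = (b ^ i) ^ α := by
  rw [Real.inv_rpow (by positivity), Real.rpow_neg (by positivity), inv_inv]

theorem min_one_div_sq_mul_rpow_le {M x α : ℝ} (hx : 0 < x) :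
    min 1 ((M / x) ^ 2) * x ^ α ≤ M ^ 2 * x ^ (α - 2) := by
  calc min 1 ((M / x) ^ 2) * x ^ α ≤ (M / x) ^ 2 * x ^ α := by
        gcongr; exact min_le_right _ _
    _ = M ^ 2 * x ^ (α - 2) := by
        rw [Real.rpow_sub hx, Real.rpow_two]; field_simp

theorem summable_and_tsum_min_one_div_sq_mul_rpow_le {b α : ℝ} (hb : 1 < b) (hα : 0 < α)
    (hα2 : α < 2) :
    ∃ C : ℝ, 0 < C ∧ ∀ M : ℝ, 1 ≤ M →
      Summable (fun i : ℕ => min 1 ((M / b ^ i) ^ 2) * (b ^ i) ^ α) ∧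
      ∑' i : ℕ, min 1 ((M / b ^ i) ^ 2) * (b ^ i) ^ α ≤ C * M ^ α := by
  have hb0 : 0 < b := one_pos.trans hb
  set r := b ^ α
  set s := b ^ (α - 2)
  have hr : 1 < r := Real.one_lt_rpow hb hα
  have hs0 : 0 < s := by positivity
  have hs1 : s < 1 := Real.rpow_lt_one_of_one_lt_of_neg hb (by linarith)
  refine ⟨r / (r - 1) + (1 - s)⁻¹, by have := sub_pos.2 hr; have := sub_pos.2 hs1; positivity,
    fun M hM => ?_⟩
  have hM0 : 0 < M := one_pos.trans_le hM
  set f := fun i : ℕ => min 1 ((M / b ^ i) ^ 2) * (b ^ i) ^ α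
  have hf0 : ∀ i, 0 ≤ f i := fun i => by positivity
  have hf_head : ∀ i, f i ≤ r ^ i := fun i => by
    rw [Real.rpow_pow_comm hb0.le]
    exact mul_le_of_le_one_left (by positivity) (min_le_left _ _)
  have hf_tail : ∀ i, f i ≤ M ^ 2 * s ^ i := fun i => by
    rw [Real.rpow_pow_comm hb0.le]
    exact min_one_div_sq_mul_rpow_le (by positivity)
  have hf : Summable f :=
    .of_nonneg_of_le hf0 hf_tail ((summable_geometric_of_lt_one hs0.le hs1).mul_left _)
  refine ⟨hf, ?_⟩
  obtain ⟨i₀, hMi₀, hi₀M⟩ := exists_pow_mem_Icc hb hM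
  have head : ∑ i ∈ Finset.range i₀, f i ≤ r / (r - 1) * M ^ α :=
    calc ∑ i ∈ Finset.range i₀, f i ≤ ∑ i ∈ Finset.range i₀, r ^ i :=
          Finset.sum_le_sum fun i _ => hf_head i
      _ = (r ^ i₀ - 1) / (r - 1) := geom_sum_eq hr.ne' i₀
      _ ≤ (b ^ i₀) ^ α / (r - 1) := by
          rw [← Real.rpow_pow_comm hb0.le]; gcongr; linarith
      _ ≤ (b * M) ^ α / (r - 1) := by gcongr
      _ = r / (r - 1) * M ^ α := by rw [Real.mul_rpow hb0.le hM0.le]; ring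
  have tail : ∑' i, f (i + i₀) ≤ (1 - s)⁻¹ * M ^ α :=
    calc ∑' i, f (i + i₀) ≤ ∑' i, M ^ 2 * s ^ i₀ * s ^ i :=
          Summable.tsum_le_tsum (fun i => by rw [mul_assoc, ← pow_add, add_comm]; exact hf_tail _)
            ((summable_nat_add_iff i₀).2 hf)
            ((summable_geometric_of_lt_one hs0.le hs1).mul_left _)
      _ = M ^ 2 * (b ^ i₀) ^ (α - 2) * (1 - s)⁻¹ := by
          rw [tsum_mul_left, tsum_geometric_of_lt_one hs0.le hs1, Real.rpow_pow_comm hb0.le]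
      _ ≤ M ^ 2 * M ^ (α - 2) * (1 - s)⁻¹ := by
          have := sub_pos.2 hs1
          gcongr M ^ 2 * ?_ * _
          exact Real.rpow_le_rpow_of_nonpos hM0 hMi₀ (by linarith)
      _ = (1 - s)⁻¹ * M ^ α := by
          rw [Real.rpow_sub hM0, Real.rpow_two]; field_simp
  rw [← hf.sum_add_tsum_nat_add i₀, add_mul]
  exact add_le_add head tail

def annulus {E : Type*} [Norm E] (R : ℝ) : Set E := (‖·‖) ⁻¹' Set.Icc (R / 2) R

theorem measurableSet_annulus {E : Type*} [NormedAddCommGroup E] [MeasurableSpace E]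
    [OpensMeasurableSpace E] (R : ℝ) : MeasurableSet (annulus R : Set E) :=
  measurable_norm measurableSet_Icc

section InnerProductSpace

variable {E : Type*} [NormedAddCommGroup E] [InnerProductSpace ℝ E]

theorem one_sub_cos_inner_le {ξ z : E} {R : ℝ} (hz : ‖z‖ ≤ R) :
    1 - Real.cos ⟪ξ, z⟫ ≤ 2 * min 1 ((‖ξ‖ * R) ^ 2) := by
  have hξz : |⟪ξ, z⟫| ≤ ‖ξ‖ * R := (abs_real_inner_le_norm ξ z).trans (by gcongr)
  refine (Real.one_sub_cos_le_two_mul_min_one_sq _).trans ?_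
  gcongr 2 * min 1 ?_
  exact sq_le_sq' (abs_le.1 hξz).1 (abs_le.1 hξz).2

theorem exists_closedBall_subset_annulus {ξ : E} {R : ℝ} (hR : 0 < R) (h₁ : 1 / 4 ≤ ‖ξ‖ * R)
    (h₂ : ‖ξ‖ * R ≤ 1) :
    ∃ c : E, closedBall c (R / 8) ⊆ annulus R ∧
      ∀ z ∈ closedBall c (R / 8), 1 / 8 ≤ ⟪ξ, z⟫ ∧ ⟪ξ, z⟫ ≤ 1 := by
  have hξ : 0 < ‖ξ‖ := pos_of_mul_pos_left (by linarith) hR.le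
  set c := (3 * R / (4 * ‖ξ‖)) • ξ
  have hc : ‖c‖ = 3 * R / 4 := by
    rw [norm_smul, Real.norm_of_nonneg (by positivity)]; field_simp
  have hξc : ⟪ξ, c⟫ = 3 / 4 * (‖ξ‖ * R) := by
    rw [real_inner_smul_right, real_inner_self_eq_norm_sq]; field_simp
  refine ⟨c, fun z hz => ?_, fun z hz => ?_⟩
  · have h := (abs_norm_sub_norm_le z c).trans (mem_closedBall_iff_norm.1 hz)
    rw [abs_le, hc] at h
    constructor <;> linarith
  · have hz' : |⟪ξ, z⟫ - ⟪ξ, c⟫| ≤ ‖ξ‖ * (R / 8) := by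
      rw [← inner_sub_right]
      exact (abs_real_inner_le_norm _ _).trans (by gcongr; exact mem_closedBall_iff_norm.1 hz)
    rw [abs_le] at hz'
    constructor <;> nlinarith

end InnerProductSpace

/-- The Lévy measure of the isotropic `α`-stable process, up to a normalising constant. -/
noncomputable def stableLevyMeasure (d : ℕ) (α : ℝ) : Measure (EuclideanSpace ℝ (Fin d)) :=
  volume.withDensity fun z => ENNReal.ofReal (‖z‖ ^ (-((d : ℝ) + α)))

theorem two_rpow_neg_two_mul (i : ℕ) : (2 : ℝ) ^ (-(2 * (i : ℝ))) = ((4 : ℝ) ^ i)⁻¹ := by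
  rw [Real.rpow_neg zero_le_two, Real.rpow_mul zero_le_two]
  norm_num

theorem two_rpow_neg_two_mul_add_one (i : ℕ) :
    (2 : ℝ) ^ (-(2 * (i : ℝ) + 1)) = ((4 : ℝ) ^ i)⁻¹ / 2 := by
  rw [neg_add, Real.rpow_add two_pos, two_rpow_neg_two_mul, Real.rpow_neg_one, div_eq_mul_inv]

theorem lacunaryStableMeasure_eq_restrict (d : ℕ) (α : ℝ) :
    lacunaryStableMeasure d α =
      (stableLevyMeasure d α).restrict (⋃ i : ℕ, annulus ((4 : ℝ) ^ i)⁻¹) := by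
  have hS := MeasurableSet.iUnion fun i : ℕ =>
    measurableSet_annulus (E := EuclideanSpace ℝ (Fin d)) ((4 : ℝ) ^ i)⁻¹
  rw [stableLevyMeasure, restrict_withDensity hS, ← withDensity_indicator hS]
  have hset : {z : EuclideanSpace ℝ (Fin d) |
      ∃ i : ℕ, (2 : ℝ) ^ (-(2 * (i : ℝ) + 1)) ≤ ‖z‖ ∧ ‖z‖ ≤ (2 : ℝ) ^ (-(2 * (i : ℝ)))} =
      ⋃ i : ℕ, annulus ((4 : ℝ) ^ i)⁻¹ := by
    ext z
    simp only [Set.mem_ofPred_eq, Set.mem_iUnion, annulus, Set.mem_preimage, Set.mem_Icc,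
      two_rpow_neg_two_mul, two_rpow_neg_two_mul_add_one]
  rw [lacunaryStableMeasure, hset]

section LacunaryStable

variable {d : ℕ} {α : ℝ}

theorem stableLevyMeasure_annulus_le (hdα : 0 ≤ (d : ℝ) + α) {R : ℝ} (hR : 0 < R) :
    stableLevyMeasure d α (annulus R) ≤
      ENNReal.ofReal (2 ^ ((d : ℝ) + α) * R ^ (-α)) *
        volume (ball (0 : EuclideanSpace ℝ (Fin d)) 1) := by
  rw [stableLevyMeasure, withDensity_apply _ (measurableSet_annulus R)]
  calc ∫⁻ z in annulus R, ENNReal.ofReal (‖z‖ ^ (-((d : ℝ) + α)))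
      ≤ ∫⁻ z in annulus R, ENNReal.ofReal ((R / 2) ^ (-((d : ℝ) + α))) :=
        setLIntegral_mono' (measurableSet_annulus R) fun z hz => ENNReal.ofReal_le_ofReal <|
          Real.rpow_le_rpow_of_nonpos (half_pos hR) hz.1 (by linarith)
    _ ≤ ENNReal.ofReal ((R / 2) ^ (-((d : ℝ) + α))) *
          volume (closedBall (0 : EuclideanSpace ℝ (Fin d)) R) := by
        rw [setLIntegral_const]
        gcongr
        exact fun z hz => mem_closedBall_zero_iff.2 hz.2
    _ = ENNReal.ofReal (2 ^ ((d : ℝ) + α) * R ^ (-α)) *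
          volume (ball (0 : EuclideanSpace ℝ (Fin d)) 1) := by
        rw [Measure.addHaar_closedBall _ _ hR.le, finrank_euclideanSpace_fin, ← mul_assoc,
          ← ENNReal.ofReal_mul (by positivity)]
        congr 2
        rw [Real.div_rpow hR.le zero_le_two, Real.rpow_neg hR.le, Real.rpow_neg zero_le_two,
          Real.rpow_add hR, Real.rpow_neg hR.le, Real.rpow_natCast]
        field_simp

theorem le_stableLevyMeasure_closedBall (hdα : 0 ≤ (d : ℝ) + α) {R : ℝ} (hR : 0 < R)
    {c : EuclideanSpace ℝ (Fin d)} (hc : closedBall c (R / 8) ⊆ annulus R) :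
    ENNReal.ofReal (R ^ (-α) / 8 ^ d) * volume (ball (0 : EuclideanSpace ℝ (Fin d)) 1) ≤
      stableLevyMeasure d α (closedBall c (R / 8)) := by
  rw [stableLevyMeasure, withDensity_apply _ measurableSet_closedBall]
  calc ENNReal.ofReal (R ^ (-α) / 8 ^ d) * volume (ball (0 : EuclideanSpace ℝ (Fin d)) 1)
      = ENNReal.ofReal (R ^ (-((d : ℝ) + α))) * volume (closedBall c (R / 8)) := by
        rw [Measure.addHaar_closedBall _ _ (by positivity), finrank_euclideanSpace_fin, ← mul_assoc,
          ← ENNReal.ofReal_mul (by positivity)]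
        congr 2
        rw [neg_add, Real.rpow_add hR, Real.rpow_neg hR.le (d : ℝ), Real.rpow_natCast, div_pow]
        field_simp
    _ = ∫⁻ _ in closedBall c (R / 8), ENNReal.ofReal (R ^ (-((d : ℝ) + α))) :=
        (setLIntegral_const _ _).symm
    _ ≤ ∫⁻ z in closedBall c (R / 8), ENNReal.ofReal (‖z‖ ^ (-((d : ℝ) + α))) :=
        setLIntegral_mono' measurableSet_closedBall fun z hz => ENNReal.ofReal_le_ofReal <|
          Real.rpow_le_rpow_of_nonpos ((half_pos hR).trans_le (hc hz).1) (hc hz).2 (by linarith)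

theorem toReal_volume_ball_pos : 0 < (volume (ball (0 : EuclideanSpace ℝ (Fin d)) 1)).toReal :=
  ENNReal.toReal_pos (measure_ball_pos _ _ one_pos).ne' measure_ball_lt_top.ne

theorem setLIntegral_one_sub_cos_inner_annulus_le (hdα : 0 ≤ (d : ℝ) + α) {R : ℝ} (hR : 0 < R)
    (ξ : EuclideanSpace ℝ (Fin d)) :
    ∫⁻ z in annulus R, ENNReal.ofReal (1 - Real.cos ⟪ξ, z⟫) ∂stableLevyMeasure d α ≤
      ENNReal.ofReal (2 * min 1 ((‖ξ‖ * R) ^ 2) *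
        (2 ^ ((d : ℝ) + α) * R ^ (-α) *
          (volume (ball (0 : EuclideanSpace ℝ (Fin d)) 1)).toReal)) := by
  calc ∫⁻ z in annulus R, ENNReal.ofReal (1 - Real.cos ⟪ξ, z⟫) ∂stableLevyMeasure d α
      ≤ ∫⁻ _ in annulus R, ENNReal.ofReal (2 * min 1 ((‖ξ‖ * R) ^ 2)) ∂stableLevyMeasure d α :=
        setLIntegral_mono' (measurableSet_annulus R) fun z hz =>
          ENNReal.ofReal_le_ofReal (one_sub_cos_inner_le hz.2)
    _ ≤ ENNReal.ofReal (2 * min 1 ((‖ξ‖ * R) ^ 2)) *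
          (ENNReal.ofReal (2 ^ ((d : ℝ) + α) * R ^ (-α)) *
            volume (ball (0 : EuclideanSpace ℝ (Fin d)) 1)) := by
        rw [setLIntegral_const]
        gcongr
        exact stableLevyMeasure_annulus_le hdα hR
    _ = _ := by
        rw [← ENNReal.ofReal_toReal measure_ball_lt_top.ne, ← ENNReal.ofReal_mul (by positivity),
          ← ENNReal.ofReal_mul (by positivity), ENNReal.ofReal_toReal measure_ball_lt_top.ne]

theorem lintegral_one_sub_cos_inner_lacunaryStableMeasure_le (hα : 0 < α) (hα2 : α < 2) :
    ∃ C : ℝ, 0 < C ∧ ∀ ξ : EuclideanSpace ℝ (Fin d), 1 ≤ ‖ξ‖ →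
      ∫⁻ z, ENNReal.ofReal (1 - Real.cos ⟪ξ, z⟫) ∂lacunaryStableMeasure d α ≤
        ENNReal.ofReal (C * ‖ξ‖ ^ α) := by
  obtain ⟨C, hC, hsum⟩ := summable_and_tsum_min_one_div_sq_mul_rpow_le (b := 4) (by norm_num) hα hα2
  set V := (volume (ball (0 : EuclideanSpace ℝ (Fin d)) 1)).toReal
  have hV : 0 < V := toReal_volume_ball_pos
  set K := 2 * 2 ^ ((d : ℝ) + α) * V
  have hK : 0 < K := by positivity
  refine ⟨K * C, by positivity, fun ξ hξ => ?_⟩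
  obtain ⟨hf, hfC⟩ := hsum ‖ξ‖ hξ
  set f := fun i : ℕ => min 1 ((‖ξ‖ / 4 ^ i) ^ 2) * ((4 : ℝ) ^ i) ^ α
  calc ∫⁻ z, ENNReal.ofReal (1 - Real.cos ⟪ξ, z⟫) ∂lacunaryStableMeasure d α
      = ∫⁻ z in ⋃ i : ℕ, annulus ((4 : ℝ) ^ i)⁻¹, ENNReal.ofReal (1 - Real.cos ⟪ξ, z⟫)
          ∂stableLevyMeasure d α := by
        rw [lacunaryStableMeasure_eq_restrict]
    _ ≤ ∑' i : ℕ, ∫⁻ z in annulus ((4 : ℝ) ^ i)⁻¹, ENNReal.ofReal (1 - Real.cos ⟪ξ, z⟫)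
          ∂stableLevyMeasure d α := lintegral_iUnion_le _ _
    _ ≤ ∑' i, ENNReal.ofReal (K * f i) := by
        refine ENNReal.tsum_le_tsum fun i => ?_
        refine (setLIntegral_one_sub_cos_inner_annulus_le (by positivity) (by positivity) ξ).trans
          (le_of_eq ?_)
        rw [inv_pow_rpow_neg zero_le_four, ← div_eq_mul_inv]
        congr 1
        simp only [K, f]
        ring
    _ = ENNReal.ofReal (K * ∑' i, f i) := by
        rw [← ENNReal.ofReal_tsum_of_nonneg (fun i => by positivity) (hf.mul_left K), tsum_mul_left]
    _ ≤ ENNReal.ofReal (K * C * ‖ξ‖ ^ α) :=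
        ENNReal.ofReal_le_ofReal <|
          (mul_le_mul_of_nonneg_left hfC hK.le).trans_eq (mul_assoc _ _ _).symm

theorem lintegral_one_sub_cos_inner_lacunaryStableMeasure_ge (hα : 0 ≤ α) :
    ∃ c : ℝ, 0 < c ∧ ∀ ξ : EuclideanSpace ℝ (Fin d), 1 ≤ ‖ξ‖ →
      ENNReal.ofReal (c * ‖ξ‖ ^ α) ≤
        ∫⁻ z, ENNReal.ofReal (1 - Real.cos ⟪ξ, z⟫) ∂lacunaryStableMeasure d α := by
  set V := (volume (ball (0 : EuclideanSpace ℝ (Fin d)) 1)).toReal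
  have hV : 0 < V := toReal_volume_ball_pos
  have hcos : 0 < 1 - Real.cos (1 / 8) := by
    have := Real.cos_lt_cos_of_nonneg_of_le_pi le_rfl (by linarith [Real.pi_gt_three])
      (by norm_num : (0 : ℝ) < 1 / 8)
    rw [Real.cos_zero] at this
    linarith
  refine ⟨(1 - Real.cos (1 / 8)) * (V / 8 ^ d), by positivity, fun ξ hξ => ?_⟩
  obtain ⟨i, hξi, hiξ⟩ := exists_pow_mem_Icc (b := 4) (by norm_num) hξ
  set R := ((4 : ℝ) ^ i)⁻¹
  have hR : 0 < R := by positivity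
  obtain ⟨c, hcA, hcξ⟩ := exists_closedBall_subset_annulus (ξ := ξ) hR
    (by rw [le_mul_inv_iff₀ (by positivity)]; linarith)
    (by rwa [mul_inv_le_iff₀ (by positivity), one_mul])
  calc ENNReal.ofReal ((1 - Real.cos (1 / 8)) * (V / 8 ^ d) * ‖ξ‖ ^ α)
      ≤ ENNReal.ofReal (1 - Real.cos (1 / 8)) *
          (ENNReal.ofReal (R ^ (-α) / 8 ^ d) * volume (ball (0 : EuclideanSpace ℝ (Fin d)) 1)) := by
        rw [← ENNReal.ofReal_toReal measure_ball_lt_top.ne, ← ENNReal.ofReal_mul (by positivity),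
          ← ENNReal.ofReal_mul (by positivity), inv_pow_rpow_neg zero_le_four]
        apply ENNReal.ofReal_le_ofReal
        calc (1 - Real.cos (1 / 8)) * (V / 8 ^ d) * ‖ξ‖ ^ α
            ≤ (1 - Real.cos (1 / 8)) * (V / 8 ^ d) * ((4 : ℝ) ^ i) ^ α := by gcongr
          _ = _ := by ring
    _ ≤ ENNReal.ofReal (1 - Real.cos (1 / 8)) * stableLevyMeasure d α (closedBall c (R / 8)) := by
        gcongr
        exact le_stableLevyMeasure_closedBall (by positivity) hR hcA
    _ = ∫⁻ _ in closedBall c (R / 8), ENNReal.ofReal (1 - Real.cos (1 / 8))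
          ∂stableLevyMeasure d α :=
        (setLIntegral_const _ _).symm
    _ ≤ ∫⁻ z in closedBall c (R / 8), ENNReal.ofReal (1 - Real.cos ⟪ξ, z⟫) ∂stableLevyMeasure d α :=
        setLIntegral_mono' measurableSet_closedBall fun z hz => ENNReal.ofReal_le_ofReal <|
          Real.one_sub_cos_le_one_sub_cos (by norm_num) (hcξ z hz).1
            ((hcξ z hz).2.trans (by linarith [Real.pi_gt_three]))
    _ ≤ ∫⁻ z in ⋃ i : ℕ, annulus ((4 : ℝ) ^ i)⁻¹, ENNReal.ofReal (1 - Real.cos ⟪ξ, z⟫)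
          ∂stableLevyMeasure d α :=
        lintegral_mono_set (hcA.trans (Set.subset_iUnion (fun i : ℕ => annulus ((4 : ℝ) ^ i)⁻¹) i))
    _ = ∫⁻ z, ENNReal.ofReal (1 - Real.cos ⟪ξ, z⟫) ∂lacunaryStableMeasure d α := by
        rw [lacunaryStableMeasure_eq_restrict]

end LacunaryStable

theorem lacunaryStableMeasure_charExponent_bounds_general
    (d : ℕ) (α : ℝ) (hα : 0 < α) (hα2 : α < 2)
    (q : EuclideanSpace ℝ (Fin d) → ℝ)
    (hq : ∀ ξ, q ξ = ∫ z, (1 - Real.cos (inner ℝ ξ z)) ∂(lacunaryStableMeasure d α)) :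
    ∃ c : ℝ, 1 ≤ c ∧ ∀ ξ : EuclideanSpace ℝ (Fin d), 1 ≤ ‖ξ‖ →
      c⁻¹ * ‖ξ‖ ^ α ≤ q ξ ∧ q ξ ≤ c * ‖ξ‖ ^ α := by
  obtain ⟨C, hC, hle⟩ := lintegral_one_sub_cos_inner_lacunaryStableMeasure_le (d := d) hα hα2
  obtain ⟨c, hc, hge⟩ := lintegral_one_sub_cos_inner_lacunaryStableMeasure_ge (d := d) hα.le
  have hq_toReal : ∀ ξ, q ξ =
      (∫⁻ z, ENNReal.ofReal (1 - Real.cos ⟪ξ, z⟫) ∂lacunaryStableMeasure d α).toReal := fun ξ => by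
    rw [hq, integral_eq_lintegral_of_nonneg_ae
      (ae_of_all _ fun z => sub_nonneg.2 (Real.cos_le_one _)) (by fun_prop)]
  refine ⟨max (max C c⁻¹) 1, le_max_right _ _, fun ξ hξ => ⟨?_, ?_⟩⟩
  · calc (max (max C c⁻¹) 1)⁻¹ * ‖ξ‖ ^ α ≤ c * ‖ξ‖ ^ α := by
          gcongr
          exact inv_le_of_inv_le₀ hc ((le_max_right _ _).trans (le_max_left _ _))
      _ ≤ q ξ := by
          rw [hq_toReal]
          exact (ENNReal.ofReal_le_iff_le_toReal
            (ne_top_of_le_ne_top ENNReal.ofReal_ne_top (hle ξ hξ))).1 (hge ξ hξ)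
  · calc q ξ ≤ C * ‖ξ‖ ^ α := by
          rw [hq_toReal]
          exact ENNReal.toReal_le_of_le_ofReal (by positivity) (hle ξ hξ)
      _ ≤ max (max C c⁻¹) 1 * ‖ξ‖ ^ α := by
          gcongr
          exact (le_max_left _ _).trans (le_max_left _ _)

/-- For the measure above with characteristic exponent
`q(ξ) = ∫ (1 - cos⟨ξ, z⟩) ν(dz)`, there is `c ≥ 1` with
`c⁻¹ |ξ|^α ≤ q(ξ) ≤ c |ξ|^α` for all `|ξ| ≥ 1`. -/
theorem lacunaryStableMeasure_charExponent_bounds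
    (d : ℕ) (hd : 1 ≤ d) (α : ℝ) (hα : 0 < α) (hα2 : α < 2)
    (q : EuclideanSpace ℝ (Fin d) → ℝ)
    (hq : ∀ ξ, q ξ = ∫ z, (1 - Real.cos (inner ℝ ξ z)) ∂(lacunaryStableMeasure d α)) :
    ∃ c : ℝ, 1 ≤ c ∧ ∀ ξ : EuclideanSpace ℝ (Fin d), 1 ≤ ‖ξ‖ →
      c⁻¹ * ‖ξ‖ ^ α ≤ q ξ ∧ q ξ ≤ c * ‖ξ‖ ^ α :=
  lacunaryStableMeasure_charExponent_bounds_general d α hα hα2 q hq
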